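/- (Per-step inequality for RAC-LoRA with SGD updates.) Let f : ℝ^{m×n} → ℝ be L-smooth and bounded below by f★. Let g(W^t) be a stochastic gradient with E[g(W^t) | W^t] = ∇f(W^t) satisfying the expected smoothness bound E[‖g(W^t)‖_F² | W^t] ≤ 2A₁(f(W^t) − f★) + B₁‖∇f(W^t)‖_F² + C₁, and let H^t be a random orthogonal projection, independent of g(W^t), with λ_min^H := λ_min(E[H^t]) > 0 and λ_max^H := λ_max(E[H^t]). For the update W^{t+1} = W^t − γ·g(W^t)·H^t with γ > 0, it holds that E[f(W^{t+1}) | W^t] − f★ ≤ (f(W^t) − f★)·(1 + γ²·A₁·L·λ_max^H) − γ·λ_min^H·‖∇f(W^t)‖_F²·(1 − γ·(L/2)·(λ_max^H/λ_min^H)·B₁) + γ²·(L/2)·λ_max^H·C₁. -/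

import Mathlib

open Matrix MeasureTheory ProbabilityTheory

attribute [local instance] Matrix.frobeniusSeminormedAddCommGroup Matrix.frobeniusNormedAddCommGroup Matrix.frobeniusNormedSpace

/-- The product measurable structure on matrices. -/
local instance matrixMeasurableSpace {a b : ℕ} : MeasurableSpace (Matrix (Fin a) (Fin b) ℝ) :=
  inferInstanceAs (MeasurableSpace ((Fin a) → (Fin b) → ℝ))

/-- Trace (Frobenius) inner product. -/
noncomputable def tinner {p q : ℕ} (X Y : Matrix (Fin p) (Fin q) ℝ) : ℝ := (Xᵀ * Y).trace

/-- `G` is the gradient field of `f` with respect to the trace inner product. -/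
def IsGradient {p q : ℕ} (f : Matrix (Fin p) (Fin q) ℝ → ℝ)
    (G : Matrix (Fin p) (Fin q) ℝ → Matrix (Fin p) (Fin q) ℝ) : Prop :=
  Differentiable ℝ f ∧ ∀ W V : Matrix (Fin p) (Fin q) ℝ, fderiv ℝ f W V = tinner (G W) V

/-- Lipschitz continuity (constant `L`) of a gradient field, in Frobenius norm. -/
def LipschitzGrad {p q : ℕ} (L : ℝ)
    (G : Matrix (Fin p) (Fin q) ℝ → Matrix (Fin p) (Fin q) ℝ) : Prop :=
  ∀ W V : Matrix (Fin p) (Fin q) ℝ, ‖G W - G V‖ ≤ L * ‖W - V‖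

/-- Smallest eigenvalue of a (symmetric) real matrix, as the infimum of its real spectrum. -/
noncomputable def lamMin {k : ℕ} (A : Matrix (Fin k) (Fin k) ℝ) : ℝ := sInf (spectrum ℝ A)

/-- Largest eigenvalue of a (symmetric) real matrix, as the supremum of its real spectrum. -/
noncomputable def lamMax {k : ℕ} (A : Matrix (Fin k) (Fin k) ℝ) : ℝ := sSup (spectrum ℝ A)

section Aux
variable {p q : ℕ}

lemma tinner_eq_sum (X Y : Matrix (Fin p) (Fin q) ℝ) :
    tinner X Y = ∑ i, ∑ j, X i j * Y i j := by
  simp only [tinner, Matrix.trace, Matrix.diag, Matrix.mul_apply, Matrix.transpose_apply]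
  exact Finset.sum_comm

lemma sq_norm_eq_sum (X : Matrix (Fin p) (Fin q) ℝ) :
    ‖X‖ ^ 2 = ∑ i, ∑ j, X i j ^ 2 := by
  have h := Matrix.frobenius_norm_def X
  have hnn : (0:ℝ) ≤ ∑ i, ∑ j, ‖X i j‖ ^ (2:ℝ) := by positivity
  rw [h, ← Real.rpow_natCast _ 2, ← Real.rpow_mul hnn]
  norm_num

lemma norm_eq_sqrt_sum (X : Matrix (Fin p) (Fin q) ℝ) :
    ‖X‖ = Real.sqrt (∑ i, ∑ j, X i j ^ 2) := by
  rw [← sq_norm_eq_sum, Real.sqrt_sq (norm_nonneg _)]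

lemma tinner_self (X : Matrix (Fin p) (Fin q) ℝ) : tinner X X = ‖X‖ ^ 2 := by
  rw [tinner_eq_sum, sq_norm_eq_sum]
  simp [sq]

lemma tinner_le_norm (X Y : Matrix (Fin p) (Fin q) ℝ) : tinner X Y ≤ ‖X‖ * ‖Y‖ := by
  rw [tinner_eq_sum, norm_eq_sqrt_sum, norm_eq_sqrt_sum,
    ← Finset.sum_product' (f := fun i j => X i j * Y i j),
    ← Finset.sum_product' (f := fun i j => X i j ^ 2),
    ← Finset.sum_product' (f := fun i j => Y i j ^ 2)]
  exact Real.sum_mul_le_sqrt_mul_sqrt _ _ _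

lemma abs_entry_le_norm (X : Matrix (Fin p) (Fin q) ℝ) (i : Fin p) (j : Fin q) :
    |X i j| ≤ ‖X‖ := by
  rw [norm_eq_sqrt_sum, ← Real.sqrt_sq_eq_abs]
  refine Real.sqrt_le_sqrt ?_
  calc X i j ^ 2 ≤ ∑ j', X i j' ^ 2 :=
        Finset.single_le_sum (f := fun j' => X i j' ^ 2) (fun _ _ => sq_nonneg _)
          (Finset.mem_univ j)
    _ ≤ ∑ i', ∑ j', X i' j' ^ 2 :=
        Finset.single_le_sum (f := fun i' => ∑ j', X i' j' ^ 2)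
          (fun _ _ => Finset.sum_nonneg fun _ _ => sq_nonneg _) (Finset.mem_univ i)

end Aux

section Desc
variable {p q : ℕ}

lemma tinner_sub_left (X Y Z : Matrix (Fin p) (Fin q) ℝ) :
    tinner (X - Y) Z = tinner X Z - tinner Y Z := by
  simp [tinner_eq_sum, Matrix.sub_apply, sub_mul, Finset.sum_sub_distrib]

lemma tinner_smul_right (r : ℝ) (X Y : Matrix (Fin p) (Fin q) ℝ) :
    tinner X (r • Y) = r * tinner X Y := by
  simp [tinner_eq_sum, Matrix.smul_apply, Finset.mul_sum]
  exact Finset.sum_congr rfl fun i _ => Finset.sum_congr rfl fun j _ => by ring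

lemma tinner_neg_right (X Y : Matrix (Fin p) (Fin q) ℝ) :
    tinner X (-Y) = -tinner X Y := by
  simp [tinner_eq_sum, Matrix.neg_apply, Finset.sum_neg_distrib]

lemma descent {f : Matrix (Fin p) (Fin q) ℝ → ℝ}
    {Gf : Matrix (Fin p) (Fin q) ℝ → Matrix (Fin p) (Fin q) ℝ} {L : ℝ} (hL : 0 ≤ L)
    (hgrad : IsGradient f Gf) (hlip : LipschitzGrad L Gf)
    (X D : Matrix (Fin p) (Fin q) ℝ) :
    f (X + D) ≤ f X + tinner (Gf X) D + L / 2 * ‖D‖ ^ 2 := by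
  have hGc : Continuous Gf := by
    refine (LipschitzWith.of_dist_le_mul (K := ⟨L, hL⟩) fun x y => ?_).continuous
    change dist (Gf x) (Gf y) ≤ L * dist x y
    simpa [dist_eq_norm] using hlip x y
  have hasD : ∀ t : ℝ, HasDerivAt (fun s : ℝ => f (X + s • D))
      (tinner (Gf (X + t • D)) D) t := by
    intro t
    have hc : HasDerivAt (fun s : ℝ => X + s • D) D t := by
      exact (((hasDerivAt_id t).smul_const D).const_add X).congr_deriv (one_smul ℝ D)
    have := ((hgrad.1 (X + t • D)).hasFDerivAt.comp_hasDerivAt t hc)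
    exact this.congr_deriv (hgrad.2 _ _)
  have hcont : Continuous fun t : ℝ => tinner (Gf (X + t • D)) D := by
    have h1 : Continuous fun t : ℝ => Gf (X + t • D) :=
      hGc.comp (by continuity)
    have h2 : Continuous fun A : Matrix (Fin p) (Fin q) ℝ => tinner A D := by
      simp only [tinner_eq_sum]
      exact continuous_finset_sum _ fun i _ => continuous_finset_sum _ fun j _ =>
        (continuous_id.matrix_elem i j).mul continuous_const
    exact h2.comp h1
  have key : f (X + D) - f X = ∫ t in (0:ℝ)..1, tinner (Gf (X + t • D)) D := by
    have := intervalIntegral.integral_eq_sub_of_hasDerivAt (a := 0) (b := 1)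
      (f := fun s : ℝ => f (X + s • D)) (f' := fun t => tinner (Gf (X + t • D)) D)
      (fun t _ => hasD t) (hcont.intervalIntegrable 0 1)
    rw [this]
    simp
  have hmono : (∫ t in (0:ℝ)..1, tinner (Gf (X + t • D)) D) ≤
      ∫ t in (0:ℝ)..1, (tinner (Gf X) D + (L * ‖D‖ ^ 2) * t) := by
    refine intervalIntegral.integral_mono_on (by norm_num)
      (hcont.intervalIntegrable 0 1)
      ((continuous_const.add (continuous_const.mul continuous_id)).intervalIntegrable 0 1)
      fun t ht => ?_
    have ht0 : 0 ≤ t := ht.1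
    have h1 : tinner (Gf (X + t • D)) D - tinner (Gf X) D ≤ L * ‖D‖ ^ 2 * t := by
      rw [← tinner_sub_left]
      calc tinner (Gf (X + t • D) - Gf X) D ≤ ‖Gf (X + t • D) - Gf X‖ * ‖D‖ :=
            tinner_le_norm _ _
        _ ≤ (L * ‖X + t • D - X‖) * ‖D‖ :=
            mul_le_mul_of_nonneg_right (hlip _ _) (norm_nonneg _)
        _ = L * ‖D‖ ^ 2 * t := by
            simp [add_sub_cancel_left, norm_smul, abs_of_nonneg ht0]
            ring
    linarith
  have hval : (∫ t in (0:ℝ)..1, (tinner (Gf X) D + (L * ‖D‖ ^ 2) * t)) =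
      tinner (Gf X) D + L / 2 * ‖D‖ ^ 2 := by
    rw [intervalIntegral.integral_add (intervalIntegrable_const)
      ((intervalIntegral.intervalIntegrable_id (μ := MeasureTheory.volume) (a := (0:ℝ)) (b := 1)).const_mul _),
      intervalIntegral.integral_const, intervalIntegral.integral_const_mul,
      integral_id]
    norm_num
    ring
  linarith [key, hmono, hval.le, hval.ge]

end Desc

section Spec
variable {k : ℕ}

lemma psd_diag_nonneg {T : Matrix (Fin k) (Fin k) ℝ} (hT : T.PosSemidef) (i : Fin k) :
    0 ≤ T i i := by
  exact hT.diag_nonneg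

lemma trace_mul_bounds {S M : Matrix (Fin k) (Fin k) ℝ}
    (hS : S.PosSemidef) (hM : M.IsHermitian) :
    lamMin M * S.trace ≤ (S * M).trace ∧ (S * M).trace ≤ lamMax M * S.trace := by
  classical
  set V : Matrix (Fin k) (Fin k) ℝ := (Matrix.IsHermitian.eigenvectorUnitary hM : Matrix (Fin k) (Fin k) ℝ) with hV
  have hunit : V * star V = 1 := Matrix.mem_unitaryGroup_iff.mp (Matrix.IsHermitian.eigenvectorUnitary hM).2
  have hofReal : (RCLike.ofReal ∘ hM.eigenvalues : Fin k → ℝ) = hM.eigenvalues := by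
    funext i; simp
  have hsp : M = V * Matrix.diagonal hM.eigenvalues * star V := by
    have := hM.spectral_theorem
    rwa [hofReal] at this
  set T : Matrix (Fin k) (Fin k) ℝ := star V * S * V with hT
  have hTpsd : T.PosSemidef := by
    have := hS.conjTranspose_mul_mul_same V
    simpa [hT, Matrix.star_eq_conjTranspose] using this
  have htrace : (S * M).trace = ∑ i, T i i * hM.eigenvalues i := by
    have hSM : S * M = (S * V * Matrix.diagonal hM.eigenvalues) * star V := by
      rw [show S * M = S * (V * Matrix.diagonal hM.eigenvalues * star V) from
        congrArg (fun A => S * A) hsp]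
      simp only [Matrix.mul_assoc]
    rw [hSM, Matrix.trace_mul_comm, ← Matrix.mul_assoc, ← Matrix.mul_assoc, ← hT]
    simp [Matrix.trace, Matrix.diag, Matrix.mul_diagonal]
  have htrT : T.trace = S.trace := by
    rw [hT, Matrix.trace_mul_cycle, hunit, Matrix.one_mul]
  have hspec : ∀ i, hM.eigenvalues i ∈ spectrum ℝ M :=
    fun i => hM.eigenvalues_mem_spectrum_real i
  have hfin : (spectrum ℝ M).Finite := Matrix.finite_real_spectrum (𝕜 := ℝ)
  have hlo : ∀ i, lamMin M ≤ hM.eigenvalues i :=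
    fun i => csInf_le hfin.bddBelow (hspec i)
  have hhi : ∀ i, hM.eigenvalues i ≤ lamMax M :=
    fun i => le_csSup hfin.bddAbove (hspec i)
  have hdiag : ∀ i, 0 ≤ T i i := psd_diag_nonneg hTpsd
  have htrS : S.trace = ∑ i, T i i := by
    rw [← htrT]; rfl
  constructor
  · rw [htrace, htrS, Finset.mul_sum]
    exact Finset.sum_le_sum fun i _ => by
      rw [mul_comm (lamMin M)]
      exact mul_le_mul_of_nonneg_left (hlo i) (hdiag i)
  · rw [htrace, htrS, Finset.mul_sum]
    exact Finset.sum_le_sum fun i _ => by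
      rw [mul_comm (lamMax M)]
      exact mul_le_mul_of_nonneg_left (hhi i) (hdiag i)

end Spec

section Integ
variable {a b : ℕ} {Ω : Type*} [MeasurableSpace Ω]

/-- Entry evaluation as a continuous linear map (w.r.t. Frobenius norm). -/
noncomputable def entryCLM (i : Fin a) (j : Fin b) : Matrix (Fin a) (Fin b) ℝ →L[ℝ] ℝ :=
  LinearMap.mkContinuous
    { toFun := fun A => A i j
      map_add' := fun A B => rfl
      map_smul' := fun r A => rfl } 1
    (fun A => by show |A i j| ≤ 1 * ‖A‖; rw [one_mul]; exact abs_entry_le_norm A i j)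

lemma integral_entry (μ : Measure Ω) {F : Ω → Matrix (Fin a) (Fin b) ℝ}
    (hF : @Integrable _ PseudoMetricSpace.toUniformSpace.toTopologicalSpace _ _ _ F μ) (i : Fin a) (j : Fin b) :
    (∫ ω, F ω ∂μ) i j = ∫ ω, F ω i j ∂μ :=
  (ContinuousLinearMap.integral_comp_comm (entryCLM i j) hF).symm

lemma integrable_entry {μ : Measure Ω} {F : Ω → Matrix (Fin a) (Fin b) ℝ}
    (hF : @Integrable _ PseudoMetricSpace.toUniformSpace.toTopologicalSpace _ _ _ F μ) (i : Fin a) (j : Fin b) :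
    Integrable (fun ω => F ω i j) μ :=
  (entryCLM i j).integrable_comp hF

lemma measurable_entry {F : Ω → Matrix (Fin a) (Fin b) ℝ} (hF : Measurable F)
    (i : Fin a) (j : Fin b) : Measurable (fun ω => F ω i j) :=
  (measurable_pi_apply j).comp ((measurable_pi_apply i).comp hF)

end Integ


local instance matrixBorel {a b : ℕ} : BorelSpace (Matrix (Fin a) (Fin b) ℝ) :=
  inferInstanceAs (BorelSpace ((Fin a) → (Fin b) → ℝ))

/-- Per-step inequality for RAC-LoRA with SGD updates (right sketch), conditionally on
`W^t = W`; the expectation is over the fresh stochastic gradient `g` and projection `H`. -/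
theorem stmt14 {p q : ℕ} {Ω : Type*} [MeasurableSpace Ω] (μ : Measure Ω) [IsProbabilityMeasure μ]
    (f : Matrix (Fin p) (Fin q) ℝ → ℝ) (Gf : Matrix (Fin p) (Fin q) ℝ → Matrix (Fin p) (Fin q) ℝ)
    (L fstar A₁ B₁ C₁ : ℝ) (hL : 0 < L)
    (hgrad : IsGradient f Gf) (hlip : LipschitzGrad L Gf)
    (hbelow : ∀ V, fstar ≤ f V)
    (hA₁ : 0 ≤ A₁) (hB₁ : 0 ≤ B₁) (hC₁ : 0 ≤ C₁)
    (W : Matrix (Fin p) (Fin q) ℝ)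
    (g : Ω → Matrix (Fin p) (Fin q) ℝ) (hgmeas : Measurable g) (hgint : @Integrable _ PseudoMetricSpace.toUniformSpace.toTopologicalSpace _ _ _ g μ)
    (hg2int : Integrable (fun ω => ‖g ω‖ ^ 2) μ)
    (hunbiased : ∫ ω, g ω ∂μ = Gf W)
    (hmoment : ∫ ω, ‖g ω‖ ^ 2 ∂μ ≤ 2 * A₁ * (f W - fstar) + B₁ * ‖Gf W‖ ^ 2 + C₁)
    (H : Ω → Matrix (Fin q) (Fin q) ℝ) (hHmeas : Measurable H) (hHint : @Integrable _ PseudoMetricSpace.toUniformSpace.toTopologicalSpace _ _ _ H μ)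
    (hproj : ∀ᵐ ω ∂μ, (H ω)ᵀ = H ω ∧ H ω * H ω = H ω)
    (hindep : IndepFun g H μ)
    (hlmin : 0 < lamMin (∫ ω, H ω ∂μ))
    (γ : ℝ) (hγ0 : 0 < γ) :
    (∫ ω, f (W - γ • (g ω * H ω)) ∂μ) - fstar ≤
      (f W - fstar) * (1 + γ ^ 2 * A₁ * L * lamMax (∫ ω, H ω ∂μ)) -
        γ * lamMin (∫ ω, H ω ∂μ) * ‖Gf W‖ ^ 2 *
          (1 - γ * (L / 2) * (lamMax (∫ ω, H ω ∂μ) / lamMin (∫ ω, H ω ∂μ)) * B₁) +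
        γ ^ 2 * (L / 2) * lamMax (∫ ω, H ω ∂μ) * C₁ := by
  classical
  set M : Matrix (Fin q) (Fin q) ℝ := ∫ ω, H ω ∂μ with hM
  set G : Matrix (Fin p) (Fin q) ℝ := Gf W with hG
  -- measurability of the product
  have hgHmeas : Measurable (fun ω => g ω * H ω) := by
    refine measurable_pi_iff.mpr fun i => ?_
    rw [measurable_pi_iff]; intro j
    simp only [Matrix.mul_apply]
    exact Finset.measurable_sum _ fun k _ =>
      (measurable_entry hgmeas i k).mul (measurable_entry hHmeas k j)
  -- a.e. norm bound on H
  have hHnorm : ∀ᵐ ω ∂μ, ‖H ω‖ ^ 2 ≤ (q : ℝ) := by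
    filter_upwards [hproj] with ω hω
    have hdiag : ∀ i, H ω i i ≤ 1 ∧ 0 ≤ H ω i i := by
      intro i
      have h1 : H ω i i = ∑ j, H ω i j ^ 2 := by
        conv_lhs => rw [← hω.2]
        simp only [Matrix.mul_apply]
        refine Finset.sum_congr rfl fun j _ => ?_
        have : H ω j i = H ω i j := (congrFun (congrFun hω.1 j) i).symm
        rw [this]; ring
      have h2 : H ω i i ^ 2 ≤ H ω i i := by
        calc H ω i i ^ 2 ≤ ∑ j, H ω i j ^ 2 :=
              Finset.single_le_sum (f := fun j => H ω i j ^ 2)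
                (fun _ _ => sq_nonneg _) (Finset.mem_univ i)
          _ = H ω i i := h1.symm
      have h3 : 0 ≤ H ω i i := by
        rw [h1]; exact Finset.sum_nonneg fun _ _ => sq_nonneg _
      exact ⟨by nlinarith, h3⟩
    have h4 : ‖H ω‖ ^ 2 = ∑ i, H ω i i := by
      rw [sq_norm_eq_sum]
      refine Finset.sum_congr rfl fun i _ => ?_
      conv_rhs => rw [← (hω.2)]
      simp only [Matrix.mul_apply]
      refine Finset.sum_congr rfl fun j _ => ?_
      have : H ω j i = H ω i j := (congrFun (congrFun hω.1 j) i).symm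
      rw [this]; ring
    rw [h4]
    calc ∑ i, H ω i i ≤ ∑ _i : Fin q, (1:ℝ) :=
          Finset.sum_le_sum fun i _ => (hdiag i).1
      _ = q := by simp
  -- independence of entries / functions of g and H
  have hindep_gg : ∀ (φ : Matrix (Fin p) (Fin q) ℝ → ℝ) (_ : Measurable φ)
      (k j : Fin q), IndepFun (fun ω => φ (g ω)) (fun ω => H ω k j) μ :=
    fun φ hφ k j => hindep.comp hφ (measurable_entry measurable_id k j)
  -- entry integrability
  have hgE : ∀ (i : Fin p) (k : Fin q), Integrable (fun ω => g ω i k) μ :=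
    fun i k => integrable_entry hgint i k
  have hHE : ∀ k j : Fin q, Integrable (fun ω => H ω k j) μ :=
    fun k j => integrable_entry hHint k j
  have hge : ∀ (i : Fin p) (k : Fin q), (∫ ω, g ω i k ∂μ) = G i k := fun i k => by
    rw [← integral_entry μ hgint, hunbiased]
  have hHe : ∀ k j : Fin q, (∫ ω, H ω k j ∂μ) = M k j := fun k j =>
    (integral_entry μ hHint k j).symm
  have hindepE : ∀ (i : Fin p) (k k' j : Fin q),
      IndepFun (fun ω => g ω i k) (fun ω => H ω k' j) μ :=
    fun i k k' j => hindep.comp (measurable_entry measurable_id i k)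
      (measurable_entry measurable_id k' j)
  have hprodInt : ∀ (i : Fin p) (k k' j : Fin q),
      Integrable (fun ω => g ω i k * H ω k' j) μ :=
    fun i k k' j => (hindepE i k k' j).integrable_mul (hgE i k) (hHE k' j)
  have hInt3 : ∀ (i : Fin p) (j k : Fin q),
      Integrable (fun ω => G i j * (g ω i k * H ω k j)) μ :=
    fun i j k => (hprodInt i k k j).const_mul _
  have hpt : ∀ ω, tinner G (g ω * H ω) = ∑ i, ∑ j, ∑ k, G i j * (g ω i k * H ω k j) := by
    intro ω
    rw [tinner_eq_sum]
    refine Finset.sum_congr rfl fun i _ => Finset.sum_congr rfl fun j _ => ?_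
    rw [Matrix.mul_apply, Finset.mul_sum]
  -- first moment computation
  have hT1 : ∫ ω, tinner G (g ω * H ω) ∂μ = tinner G (G * M) := by
    calc ∫ ω, tinner G (g ω * H ω) ∂μ
        = ∫ ω, ∑ i, ∑ j, ∑ k, G i j * (g ω i k * H ω k j) ∂μ := by
          exact integral_congr_ae (Filter.Eventually.of_forall hpt)
      _ = ∑ i, ∑ j, ∑ k, ∫ ω, G i j * (g ω i k * H ω k j) ∂μ := by
          rw [integral_finset_sum _ (fun i _ => integrable_finset_sum _ (fun j _ =>
            integrable_finset_sum _ (fun k _ => hInt3 i j k)))]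
          refine Finset.sum_congr rfl fun i _ => ?_
          rw [integral_finset_sum _ (fun j _ =>
            integrable_finset_sum _ (fun k _ => hInt3 i j k))]
          refine Finset.sum_congr rfl fun j _ => ?_
          rw [integral_finset_sum _ (fun k _ => hInt3 i j k)]
      _ = ∑ i, ∑ j, ∑ k, G i j * (G i k * M k j) := by
          refine Finset.sum_congr rfl fun i _ => Finset.sum_congr rfl fun j _ =>
            Finset.sum_congr rfl fun k _ => ?_
          have hmul : (∫ ω, g ω i k * H ω k j ∂μ)
              = (∫ ω, g ω i k ∂μ) * ∫ ω, H ω k j ∂μ :=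
            (hindepE i k k j).integral_mul_eq_mul_integral (hgE i k).aestronglyMeasurable (hHE k j).aestronglyMeasurable
          rw [integral_const_mul, hmul, hge, hHe]
      _ = tinner G (G * M) := by
          rw [tinner_eq_sum]
          exact Finset.sum_congr rfl fun i _ => Finset.sum_congr rfl fun j _ => by
            rw [Matrix.mul_apply, Finset.mul_sum]
  -- symmetry of M
  have hMherm : M.IsHermitian := by
    refine Matrix.IsHermitian.ext fun k j => ?_
    rw [star_trivial]
    show M j k = M k j
    rw [hHe j k |>.symm, hHe k j |>.symm]
    refine integral_congr_ae ?_
    filter_upwards [hproj] with ω hω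
    exact (congrFun (congrFun hω.1 j) k).symm
  -- second moment matrix
  set S : Matrix (Fin q) (Fin q) ℝ :=
    Matrix.of (fun j k => ∫ ω, ((g ω)ᵀ * g ω) j k ∂μ) with hS
  have hggmeas : ∀ j k : Fin q, Measurable (fun m : Matrix (Fin p) (Fin q) ℝ => (mᵀ * m) j k) := by
    intro j k
    simp only [Matrix.mul_apply, Matrix.transpose_apply]
    exact Finset.measurable_sum _ fun i _ =>
      (measurable_entry measurable_id i j).mul (measurable_entry measurable_id i k)
  have hggbd : ∀ (ω : Ω) (j k : Fin q), |((g ω)ᵀ * g ω) j k| ≤ ‖g ω‖ ^ 2 := by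
    intro ω j k
    calc |((g ω)ᵀ * g ω) j k| ≤ ‖(g ω)ᵀ * g ω‖ := abs_entry_le_norm _ j k
      _ ≤ ‖(g ω)ᵀ‖ * ‖g ω‖ := Matrix.frobenius_norm_mul _ _
      _ = ‖g ω‖ ^ 2 := by rw [Matrix.frobenius_norm_transpose]; ring
  have hggint : ∀ j k : Fin q, Integrable (fun ω => ((g ω)ᵀ * g ω) j k) μ := by
    intro j k
    refine Integrable.mono' hg2int (((hggmeas j k).comp hgmeas).aestronglyMeasurable) ?_
    exact Filter.Eventually.of_forall fun ω => by
      simpa [Real.norm_eq_abs] using hggbd ω j k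
  have hindepS : ∀ j k k' j' : Fin q,
      IndepFun (fun ω => ((g ω)ᵀ * g ω) j k) (fun ω => H ω k' j') μ :=
    fun j k k' j' => hindep.comp (hggmeas j k) (measurable_entry measurable_id k' j')
  have hSHint : ∀ j k k' j' : Fin q,
      Integrable (fun ω => ((g ω)ᵀ * g ω) j k * H ω k' j') μ :=
    fun j k k' j' => (hindepS j k k' j').integrable_mul (hggint j k) (hHE k' j')
  -- pointwise identity for the squared norm
  have hptw : ∀ᵐ ω ∂μ, ‖g ω * H ω‖ ^ 2 = ∑ j, ∑ k, ((g ω)ᵀ * g ω) j k * H ω k j := by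
    filter_upwards [hproj] with ω hω
    have h1 : ‖g ω * H ω‖ ^ 2 = ((g ω * H ω)ᵀ * (g ω * H ω)).trace := by
      rw [← tinner_self]; rfl
    have h2 : (g ω * H ω)ᵀ * (g ω * H ω) = H ω * ((g ω)ᵀ * g ω) * H ω := by
      rw [Matrix.transpose_mul, hω.1]
      simp only [Matrix.mul_assoc]
    have h3 : (H ω * ((g ω)ᵀ * g ω) * H ω).trace = (((g ω)ᵀ * g ω) * H ω).trace := by
      rw [Matrix.trace_mul_cycle (H ω) ((g ω)ᵀ * g ω) (H ω), hω.2]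
      exact Matrix.trace_mul_comm _ _
    rw [h1, h2, h3]
    simp only [Matrix.trace, Matrix.diag, Matrix.mul_apply]
  -- second moment computation
  have hT2 : ∫ ω, ‖g ω * H ω‖ ^ 2 ∂μ = (S * M).trace := by
    calc ∫ ω, ‖g ω * H ω‖ ^ 2 ∂μ
        = ∫ ω, ∑ j, ∑ k, ((g ω)ᵀ * g ω) j k * H ω k j ∂μ := integral_congr_ae hptw
      _ = ∑ j, ∑ k, ∫ ω, ((g ω)ᵀ * g ω) j k * H ω k j ∂μ := by
          rw [integral_finset_sum _ (fun j _ =>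
            integrable_finset_sum _ (fun k _ => hSHint j k k j))]
          exact Finset.sum_congr rfl fun j _ =>
            integral_finset_sum _ (fun k _ => hSHint j k k j)
      _ = ∑ j, ∑ k, S j k * M k j := by
          refine Finset.sum_congr rfl fun j _ => Finset.sum_congr rfl fun k _ => ?_
          have hmul : (∫ ω, ((g ω)ᵀ * g ω) j k * H ω k j ∂μ)
              = (∫ ω, ((g ω)ᵀ * g ω) j k ∂μ) * ∫ ω, H ω k j ∂μ :=
            (hindepS j k k j).integral_mul_eq_mul_integral (hggint j k).aestronglyMeasurable (hHE k j).aestronglyMeasurable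
          rw [hmul, hHe]
          rfl
      _ = (S * M).trace := by
          simp only [Matrix.trace, Matrix.diag, Matrix.mul_apply]
  -- S is PSD with trace equal to the second moment of g
  have hSherm : S.IsHermitian := by
    refine Matrix.IsHermitian.ext fun k j => ?_
    rw [star_trivial]
    show S j k = S k j
    refine integral_congr_ae (Filter.Eventually.of_forall fun ω => ?_)
    simp only [Matrix.mul_apply, Matrix.transpose_apply]
    exact Finset.sum_congr rfl fun i _ => mul_comm _ _
  have hSpsd : S.PosSemidef := by
    refine Matrix.PosSemidef.of_dotProduct_mulVec_nonneg hSherm fun x => ?_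
    have hrw : ∀ (T : Matrix (Fin q) (Fin q) ℝ),
        dotProduct (star x) (T *ᵥ x) = ∑ j, ∑ k, x j * (T j k * x k) := by
      intro T
      simp only [dotProduct, Matrix.mulVec, star_trivial, Finset.mul_sum]
    rw [hrw]
    have hterm : ∀ j k : Fin q, (∫ ω, x j * (((g ω)ᵀ * g ω) j k * x k) ∂μ)
        = x j * (S j k * x k) := by
      intro j k
      rw [integral_const_mul]
      congr 1
      rw [integral_mul_const]
      rfl
    have hint : ∀ j k : Fin q,
        Integrable (fun ω => x j * (((g ω)ᵀ * g ω) j k * x k)) μ :=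
      fun j k => (((hggint j k).mul_const _).const_mul _)
    have : ∑ j, ∑ k, x j * (S j k * x k)
        = ∫ ω, ∑ j, ∑ k, x j * (((g ω)ᵀ * g ω) j k * x k) ∂μ := by
      rw [integral_finset_sum _ (fun j _ => integrable_finset_sum _ (fun k _ => hint j k))]
      refine Finset.sum_congr rfl fun j _ => ?_
      rw [integral_finset_sum _ (fun k _ => hint j k)]
      exact Finset.sum_congr rfl fun k _ => (hterm j k).symm
    rw [this]
    refine integral_nonneg fun ω => ?_
    have h := (Matrix.posSemidef_conjTranspose_mul_self (g ω)).dotProduct_mulVec_nonneg x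
    rw [hrw] at h
    exact h
  have hStrace : S.trace = ∫ ω, ‖g ω‖ ^ 2 ∂μ := by
    have h1 : ∀ ω, ‖g ω‖ ^ 2 = ∑ j, ((g ω)ᵀ * g ω) j j := by
      intro ω
      rw [← tinner_self]
      rfl
    calc S.trace = ∑ j, ∫ ω, ((g ω)ᵀ * g ω) j j ∂μ := rfl
      _ = ∫ ω, ∑ j, ((g ω)ᵀ * g ω) j j ∂μ :=
          (integral_finset_sum _ (fun j _ => hggint j j)).symm
      _ = ∫ ω, ‖g ω‖ ^ 2 ∂μ := integral_congr_ae
          (Filter.Eventually.of_forall fun ω => (h1 ω).symm)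
  -- eigenvalue facts
  have hfinM : (spectrum ℝ M).Finite := Matrix.finite_real_spectrum (𝕜 := ℝ)
  have hneM : (spectrum ℝ M).Nonempty := by
    by_contra h
    rw [Set.not_nonempty_iff_eq_empty] at h
    rw [lamMin, h, Real.sInf_empty] at hlmin
    exact lt_irrefl 0 hlmin
  have hminmax : lamMin M ≤ lamMax M := csInf_le_csSup hneM hfinM.bddBelow hfinM.bddAbove
  have hlmax : 0 < lamMax M := lt_of_lt_of_le hlmin hminmax
  -- the two spectral bounds
  have hT1ge : lamMin M * ‖G‖ ^ 2 ≤ tinner G (G * M) := by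
    have hb := (trace_mul_bounds (Matrix.posSemidef_conjTranspose_mul_self G) hMherm).1
    have h1 : tinner G (G * M) = ((Gᵀ * G) * M).trace := by
      rw [tinner, Matrix.mul_assoc]
    have h2 : (Gᵀ * G).trace = ‖G‖ ^ 2 := by
      rw [← tinner_self]; rfl
    rw [h1, ← h2]
    exact hb
  have hT2le : (S * M).trace ≤ lamMax M * ∫ ω, ‖g ω‖ ^ 2 ∂μ := by
    have hb := (trace_mul_bounds hSpsd hMherm).2
    rwa [hStrace] at hb
  -- pointwise descent bound
  have hdesc_pt : ∀ ω, f (W - γ • (g ω * H ω)) ≤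
      f W - γ * tinner G (g ω * H ω) + L / 2 * γ ^ 2 * ‖g ω * H ω‖ ^ 2 := by
    intro ω
    have hd := descent hL.le hgrad hlip W (-(γ • (g ω * H ω)))
    have e1 : W + -(γ • (g ω * H ω)) = W - γ • (g ω * H ω) := by
      rw [sub_eq_add_neg]
    have e2 : tinner G (-(γ • (g ω * H ω))) = -(γ * tinner G (g ω * H ω)) := by
      rw [tinner_neg_right, tinner_smul_right]
    have e3 : ‖-(γ • (g ω * H ω))‖ ^ 2 = γ ^ 2 * ‖g ω * H ω‖ ^ 2 := by
      rw [norm_neg, norm_smul, mul_pow, Real.norm_eq_abs, sq_abs]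
    rw [e1, e2, e3] at hd
    calc f (W - γ • (g ω * H ω)) ≤
        f W + -(γ * tinner G (g ω * H ω)) + L / 2 * (γ ^ 2 * ‖g ω * H ω‖ ^ 2) := hd
      _ = f W - γ * tinner G (g ω * H ω) + L / 2 * γ ^ 2 * ‖g ω * H ω‖ ^ 2 := by ring
  -- integrability of the pieces
  have hT1int : Integrable (fun ω => tinner G (g ω * H ω)) μ := by
    have : (fun ω => tinner G (g ω * H ω))
        = fun ω => ∑ i, ∑ j, ∑ k, G i j * (g ω i k * H ω k j) := funext hpt
    rw [this]
    exact integrable_finset_sum _ fun i _ => integrable_finset_sum _ fun j _ =>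
      integrable_finset_sum _ fun k _ => hInt3 i j k
  have hV2int : Integrable (fun ω => ‖g ω * H ω‖ ^ 2) μ := by
    have hmeas : Measurable (fun ω => ‖g ω * H ω‖ ^ 2) := by
      have : (fun ω => ‖g ω * H ω‖ ^ 2)
          = fun ω => ∑ i, ∑ j, (g ω * H ω) i j ^ 2 := funext fun ω => sq_norm_eq_sum _
      rw [this]
      exact Finset.measurable_sum _ fun i _ => Finset.measurable_sum _ fun j _ =>
        (measurable_entry hgHmeas i j).pow measurable_const
    refine Integrable.mono' (hg2int.const_mul (q : ℝ)) hmeas.aestronglyMeasurable ?_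
    filter_upwards [hHnorm] with ω hω
    rw [Real.norm_eq_abs, abs_of_nonneg (sq_nonneg _)]
    calc ‖g ω * H ω‖ ^ 2 ≤ (‖g ω‖ * ‖H ω‖) ^ 2 := by
          have h := Matrix.frobenius_norm_mul (g ω) (H ω)
          exact pow_le_pow_left₀ (norm_nonneg _) h 2
      _ = ‖g ω‖ ^ 2 * ‖H ω‖ ^ 2 := by ring
      _ ≤ ‖g ω‖ ^ 2 * (q : ℝ) := by
          exact mul_le_mul_of_nonneg_left hω (sq_nonneg _)
      _ = (q : ℝ) * ‖g ω‖ ^ 2 := by ring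
  set u : Ω → ℝ := fun ω =>
    f W - γ * tinner G (g ω * H ω) + L / 2 * γ ^ 2 * ‖g ω * H ω‖ ^ 2 with hu
  have hu_int : Integrable u μ :=
    ((integrable_const _).sub (hT1int.const_mul γ)).add (hV2int.const_mul _)
  have hfW'_meas : Measurable (fun ω => f (W - γ • (g ω * H ω))) := by
    have hfm : Measurable f := hgrad.1.continuous.measurable
    refine hfm.comp ?_
    refine measurable_pi_iff.mpr fun i => ?_
    rw [measurable_pi_iff]; intro j
    have : (fun ω => (W - γ • (g ω * H ω)) i j)
        = fun ω => W i j - γ * (g ω * H ω) i j := by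
      funext ω
      simp [Matrix.sub_apply, Matrix.smul_apply]
    rw [this]
    exact measurable_const.sub ((measurable_entry hgHmeas i j).const_mul γ)
  have hfW'_int : Integrable (fun ω => f (W - γ • (g ω * H ω))) μ := by
    refine Integrable.mono' ((hu_int.abs.add (integrable_const |fstar|)))
      hfW'_meas.aestronglyMeasurable ?_
    refine Filter.Eventually.of_forall fun ω => ?_
    have h1 : fstar ≤ f (W - γ • (g ω * H ω)) := hbelow _
    have h2 : f (W - γ • (g ω * H ω)) ≤ u ω := hdesc_pt ω
    rw [Real.norm_eq_abs]
    show |f (W - γ • (g ω * H ω))| ≤ |u ω| + |fstar|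
    have h3 := le_abs_self (u ω)
    have h4 := neg_abs_le fstar
    have h5 := abs_nonneg (u ω)
    have h6 := abs_nonneg fstar
    rcases abs_cases (f (W - γ • (g ω * H ω))) with ⟨he, _⟩ | ⟨he, _⟩ <;> rw [he] <;> linarith
  -- integrate the descent bound
  have hEf : (∫ ω, f (W - γ • (g ω * H ω)) ∂μ) ≤ ∫ ω, u ω ∂μ :=
    integral_mono hfW'_int hu_int hdesc_pt
  have hEu : (∫ ω, u ω ∂μ) = f W - γ * tinner G (G * M)
      + L / 2 * γ ^ 2 * ∫ ω, ‖g ω * H ω‖ ^ 2 ∂μ := by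
    have hInt1 : Integrable (fun ω => f W - γ * tinner G (g ω * H ω)) μ :=
      (integrable_const _).sub (hT1int.const_mul γ)
    have hInt2 : Integrable (fun ω => L / 2 * γ ^ 2 * ‖g ω * H ω‖ ^ 2) μ :=
      hV2int.const_mul _
    have hInta : Integrable (fun ω => γ * tinner G (g ω * H ω)) μ := hT1int.const_mul γ
    rw [hu]
    rw [integral_add hInt1 hInt2, integral_sub (integrable_const _) hInta,
      integral_const, integral_const_mul, integral_const_mul, hT1]
    simp [measure_univ]
  -- final arithmetic
  have hsq : 0 ≤ L / 2 * γ ^ 2 := by positivity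
  have hmain : (∫ ω, f (W - γ • (g ω * H ω)) ∂μ) ≤
      f W - γ * (lamMin M * ‖G‖ ^ 2)
      + L / 2 * γ ^ 2 * (lamMax M * (2 * A₁ * (f W - fstar) + B₁ * ‖G‖ ^ 2 + C₁)) := by
    have s1 : γ * (lamMin M * ‖G‖ ^ 2) ≤ γ * tinner G (G * M) :=
      mul_le_mul_of_nonneg_left hT1ge hγ0.le
    have s2 : (∫ ω, ‖g ω * H ω‖ ^ 2 ∂μ) ≤
        lamMax M * (2 * A₁ * (f W - fstar) + B₁ * ‖G‖ ^ 2 + C₁) := by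
      calc (∫ ω, ‖g ω * H ω‖ ^ 2 ∂μ) = (S * M).trace := hT2
        _ ≤ lamMax M * ∫ ω, ‖g ω‖ ^ 2 ∂μ := hT2le
        _ ≤ lamMax M * (2 * A₁ * (f W - fstar) + B₁ * ‖G‖ ^ 2 + C₁) :=
            mul_le_mul_of_nonneg_left hmoment hlmax.le
    have s3 : L / 2 * γ ^ 2 * (∫ ω, ‖g ω * H ω‖ ^ 2 ∂μ) ≤
        L / 2 * γ ^ 2 * (lamMax M * (2 * A₁ * (f W - fstar) + B₁ * ‖G‖ ^ 2 + C₁)) :=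
      mul_le_mul_of_nonneg_left s2 hsq
    calc (∫ ω, f (W - γ • (g ω * H ω)) ∂μ) ≤ ∫ ω, u ω ∂μ := hEf
      _ = f W - γ * tinner G (G * M) + L / 2 * γ ^ 2 * ∫ ω, ‖g ω * H ω‖ ^ 2 ∂μ := hEu
      _ ≤ f W - γ * (lamMin M * ‖G‖ ^ 2)
          + L / 2 * γ ^ 2 * (lamMax M * (2 * A₁ * (f W - fstar) + B₁ * ‖G‖ ^ 2 + C₁)) := by
        linarith
  have halg : (f W - fstar) * (1 + γ ^ 2 * A₁ * L * lamMax M) -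
        γ * lamMin M * ‖G‖ ^ 2 * (1 - γ * (L / 2) * (lamMax M / lamMin M) * B₁) +
        γ ^ 2 * (L / 2) * lamMax M * C₁
      = f W - γ * (lamMin M * ‖G‖ ^ 2)
        + L / 2 * γ ^ 2 * (lamMax M * (2 * A₁ * (f W - fstar) + B₁ * ‖G‖ ^ 2 + C₁))
        - fstar := by
    have hne : lamMin M ≠ 0 := ne_of_gt hlmin
    field_simp
    ring
  rw [hG] at halg hmain
  rw [halg]
  linarith
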